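/- arXiv:1709.10334 — 2 statements merged into one kernel-verified Lean document; each statement's English description precedes it below -/
import Mathlib

section
/- Let F be a field, λ ∈ F with λ ≠ 0 and λ ≠ −1, n ≥ 1, and let X, Y be n×n matrices over F. Then the matrix M_1(λI_{5n} + J) + M_2(K_{X,Y}) is nonsingular. -/
/-!
Since `M₁(A) + M₂(B) = I ⊕ I ⊕ (1 + λ)I ⊕ (A + B)` is block diagonal and `1 + λ ≠ 0`, it suffices
that `λI + J + K_{X,Y}` is invertible. Ordering the five blocks by the grades `0, 1, 2, 3, 1`, every
nonzero block of `J + K_{X,Y}` goes strictly up in grade, so `J + K_{X,Y}` is nilpotent, and a nonzero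
scalar plus a nilpotent is a unit.
-/

/-- The `5n × 5n` matrix `J`, partitioned into `n × n` blocks, with identity
blocks in block positions `(1,2)`, `(2,3)`, `(3,4)` (1-indexed) and zero blocks
elsewhere.  Rows and columns are indexed by `Fin 5 × Fin n`, the first
component being the block index. -/
def Jmat (F : Type*) [Field F] (n : ℕ) :
    Matrix (Fin 5 × Fin n) (Fin 5 × Fin n) F :=
  Matrix.of fun p q =>
    if (p.1 = 0 ∧ q.1 = 1) ∨ (p.1 = 1 ∧ q.1 = 2) ∨ (p.1 = 2 ∧ q.1 = 3) then
      (1 : Matrix (Fin n) (Fin n) F) p.2 q.2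
    else 0

/-- The `5n × 5n` matrix `K_{X,Y}`, partitioned into `n × n` blocks, with the
block `X` in block positions `(1,3)` and `(2,4)`, the block `Y` in position
`(1,5)`, the identity block in position `(5,4)`, and zero blocks elsewhere. -/
def Kmat {F : Type*} [Field F] {n : ℕ} (X Y : Matrix (Fin n) (Fin n) F) :
    Matrix (Fin 5 × Fin n) (Fin 5 × Fin n) F :=
  Matrix.of fun p q =>
    if (p.1 = 0 ∧ q.1 = 2) ∨ (p.1 = 1 ∧ q.1 = 3) then X p.2 q.2
    else if p.1 = 0 ∧ q.1 = 4 then Y p.2 q.2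
    else if p.1 = 4 ∧ q.1 = 3 then (1 : Matrix (Fin n) (Fin n) F) p.2 q.2
    else 0

/-- Index type for the block-diagonal `(7m+6) × (7m+6)` matrices `M₁(A)` and
`M₂(B)`, where the `m × m` matrices `A, B` are indexed by an arbitrary type
`ι` with `m` elements. -/
abbrev MIdx (m : ℕ) (ι : Type) : Type := Fin (2*m+2) ⊕ (Fin (3*m+3) ⊕ (Fin (m+1) ⊕ ι))

/-- `M₁(A) := I_{2m+2} ⊕ 0_{3m+3} ⊕ I_{m+1} ⊕ A`, a `(7m+6) × (7m+6)` matrix. -/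
def M1 {F : Type*} [Field F] (m : ℕ) {ι : Type} [Fintype ι] [DecidableEq ι]
    (A : Matrix ι ι F) : Matrix (MIdx m ι) (MIdx m ι) F :=
  Matrix.fromBlocks 1 0 0
    (Matrix.fromBlocks 0 0 0
      (Matrix.fromBlocks 1 0 0 A))

/-- `M₂(B) := 0_{2m+2} ⊕ I_{3m+3} ⊕ λI_{m+1} ⊕ B`, a `(7m+6) × (7m+6)` matrix. -/
def M2 {F : Type*} [Field F] (m : ℕ) {ι : Type} [Fintype ι] [DecidableEq ι]
    (l : F) (B : Matrix ι ι F) : Matrix (MIdx m ι) (MIdx m ι) F :=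
  Matrix.fromBlocks 0 0 0
    (Matrix.fromBlocks 1 0 0
      (Matrix.fromBlocks (l • (1 : Matrix (Fin (m+1)) (Fin (m+1)) F)) 0 0 B))

section SmulOne

variable {K A : Type*} [Field K] [Ring A] [Algebra K A] {c : K}

theorem isUnit_smul_one (hc : c ≠ 0) : IsUnit (c • (1 : A)) :=
  Algebra.algebraMap_eq_smul_one (A := A) c ▸ hc.isUnit.map (algebraMap K A)

theorem IsNilpotent.isUnit_smul_one_add (hc : c ≠ 0) {N : A} (hN : IsNilpotent N) :
    IsUnit (c • 1 + N) :=
  hN.isUnit_add_left_of_commute (isUnit_smul_one hc) ((Commute.one_right N).smul_right c)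

end SmulOne

namespace Matrix

variable {R α : Type*} [Semiring R] [Fintype α] [DecidableEq α]

theorem pow_apply_eq_zero_of_weight_lt (N : Matrix α α R) (w : α → ℕ)
    (hN : ∀ p q, w q ≤ w p → N p q = 0) (k : ℕ) {p q : α} (hpq : w q < w p + k) :
    (N ^ k) p q = 0 := by
  induction k generalizing p with
  | zero => exact one_apply_ne' (by rintro rfl; omega)
  | succ k ih =>
    rw [pow_succ', mul_apply]
    refine Finset.sum_eq_zero fun r _ => ?_
    by_cases hr : w r ≤ w p
    · rw [hN p r hr, zero_mul]
    · rw [ih (by omega), mul_zero]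

theorem isNilpotent_of_weight_lt (N : Matrix α α R) (w : α → ℕ) {b : ℕ} (hb : ∀ p, w p ≤ b)
    (hN : ∀ p q, w q ≤ w p → N p q = 0) : IsNilpotent N :=
  ⟨b + 1, ext fun p q => pow_apply_eq_zero_of_weight_lt N w hN _ (by have := hb q; omega)⟩

end Matrix

theorem isNilpotent_Jmat_add_Kmat {F : Type*} [Field F] {n : ℕ} (X Y : Matrix (Fin n) (Fin n) F) :
    IsNilpotent (Jmat F n + Kmat X Y) := by
  refine Matrix.isNilpotent_of_weight_lt _ (fun p => ![0, 1, 2, 3, 1] p.1) (b := 3)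
    (by rintro ⟨a, i⟩; fin_cases a <;> simp) ?_
  rintro ⟨a, i⟩ ⟨b, j⟩ hab
  fin_cases a <;> fin_cases b <;> simp_all [Jmat, Kmat]

section BlockDiagonal

variable {F : Type*} [Field F] (m : ℕ) {ι : Type} [Fintype ι] [DecidableEq ι]

theorem M1_add_M2_eq_fromBlocks (l : F) (A B : Matrix ι ι F) :
    M1 m A + M2 m l B =
      Matrix.fromBlocks 1 0 0
        (Matrix.fromBlocks 1 0 0 (Matrix.fromBlocks ((1 + l) • 1) 0 0 (A + B))) := by
  simp [M1, M2, Matrix.fromBlocks_add, add_smul]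

theorem isUnit_M1_add_M2_iff {l : F} (hl : 1 + l ≠ 0) (A B : Matrix ι ι F) :
    IsUnit (M1 m A + M2 m l B) ↔ IsUnit (A + B) := by
  simp [M1_add_M2_eq_fromBlocks, isUnit_smul_one hl]

end BlockDiagonal

theorem M1_add_M2_isUnit_general (F : Type*) [Field F] (l : F) (hl0 : l ≠ 0)
    (hl1 : l ≠ -1) (n : ℕ) (X Y : Matrix (Fin n) (Fin n) F) :
    IsUnit (M1 (5*n) (l • (1 : Matrix (Fin 5 × Fin n) (Fin 5 × Fin n) F) + Jmat F n)
      + M2 (5*n) l (Kmat X Y)) := by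
  have h1l : 1 + l ≠ 0 := fun h => hl1 (by linear_combination h)
  rw [isUnit_M1_add_M2_iff _ h1l, add_assoc]
  exact (isNilpotent_Jmat_add_Kmat X Y).isUnit_smul_one_add hl0

/-- For `λ ∈ F` with `λ ≠ 0` and `λ ≠ -1`, and any `n × n` matrices `X, Y`,
the matrix `M₁(λI_{5n} + J) + M₂(K_{X,Y})` (of size `(7·5n+6) × (7·5n+6)`)
is nonsingular. -/
theorem M1_add_M2_isUnit (F : Type*) [Field F] (l : F) (hl0 : l ≠ 0)
    (hl1 : l ≠ -1) (n : ℕ) (hn : 1 ≤ n) (X Y : Matrix (Fin n) (Fin n) F) :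
    IsUnit (M1 (5*n) (l • (1 : Matrix (Fin 5 × Fin n) (Fin 5 × Fin n) F) + Jmat F n)
      + M2 (5*n) l (Kmat X Y)) :=
  M1_add_M2_isUnit_general F l hl0 hl1 n X Y
end

section
/- Let F be a field with at least 3 elements, let λ ∈ F with λ ≠ 0 and λ ≠ −1, let n ≥ 1, and let (X,Y) and (X',Y') be pairs of n×n matrices over F. Then (X,Y) and (X',Y') are similar if and only if the pairs (M_1(λI_{5n}+J), M_2(K_{X,Y})) and (M_1(λI_{5n}+J), M_2(K_{X',Y'})) are weakly similar. Moreover, M_1(λI_{5n}+J) and M_2(K_{X,Y}) commute. -/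
/-- Two pairs `(A, B)` and `(A', B')` of square matrices of the same size are
*weakly similar* if there are a nonsingular matrix `S` and a nonsingular
`2 × 2` matrix `[[α, β], [γ, δ]]` with `S⁻¹(αA + βB)S = A'` and
`S⁻¹(γA + δB)S = B'`. -/
def WeaklySimilar {F : Type*} [Field F] {N : Type*} [Fintype N] [DecidableEq N]
    (A B A' B' : Matrix N N F) : Prop :=
  ∃ (S : Matrix N N F) (α β γ δ : F),
    IsUnit S ∧ IsUnit !![α, β; γ, δ] ∧
    S⁻¹ * (α • A + β • B) * S = A' ∧ S⁻¹ * (γ • A + δ • B) * S = B'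

/-!
`J` and `K = K_{X,Y}` are commuting nilpotent matrices, so the pencil `a M₁ + b M₂` has
eigenvalues `a, b, a + bλ, aλ` with multiplicities `2m+2, 3m+3, m+1, m`. Comparing these
multisets with those of `M₁` and `M₂` shows that a weak similarity between the two pairs is an
honest similarity `S`: it commutes with `M₁` and intertwines `M₂(K_{X,Y})` with `M₂(K_{X',Y'})`.
As `K` has no nonzero eigenvalue, the last block row of `S` is `[R 0 0 T]`, where `T` commutes
with `J` and intertwines the two `K`'s. Commuting with `J` makes the fourth block row of `T` equal
to `(0, 0, 0, W, 0)` with `W` the first diagonal block, and the `K`-relation gives `XW = WX'` and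
`YW = WY'`. The corresponding rows of `S` vanish outside this copy of `W`, so `W` is invertible
because `S` is. Conversely a similarity `W` lifts to `I ⊕ I ⊕ I ⊕ diag(W, …, W)`.
-/

open Matrix Polynomial

section LinearAlgebra

variable {R : Type*} [CommRing R] {N : Type*} [Fintype N] [DecidableEq N]

theorem Matrix.inv_mul_mul_eq_iff {S A B : Matrix N N R} (hS : IsUnit S) :
    S⁻¹ * A * S = B ↔ A * S = S * B := by
  have hS' : IsUnit S.det := (isUnit_iff_isUnit_det S).mp hS
  constructor
  · rintro rfl
    rw [← mul_assoc, ← mul_assoc, mul_nonsing_inv _ hS', one_mul]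
  · intro h
    rw [mul_assoc, h, nonsing_inv_mul_cancel_left _ _ hS']

theorem Matrix.isUnit_submatrix_of_apply_eq_zero {κ : Type*} [Fintype κ] [DecidableEq κ]
    {S : Matrix N N R} (hS : IsUnit S) {e : κ → N} (he : Function.Injective e)
    (hrow : ∀ i c, c ∉ Set.range e → S (e i) c = 0) : IsUnit (S.submatrix e e) := by
  refine IsUnit.of_mul_eq_one (S⁻¹.submatrix e e) ?_
  ext i j
  rw [← submatrix_one e he, ← mul_nonsing_inv S ((isUnit_iff_isUnit_det S).mp hS),
    submatrix_apply, mul_apply, mul_apply]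
  exact Fintype.sum_of_injective e he _ _ (fun c hc => by rw [hrow i c hc, zero_mul])
    (fun _ => rfl)

theorem Matrix.charpoly_smul_one (c : R) :
    (c • 1 : Matrix N N R).charpoly = (X - C c) ^ Fintype.card N := by
  rw [smul_one_eq_diagonal, charpoly_diagonal, Finset.prod_const, Finset.card_univ]

variable [IsDomain R]

theorem Matrix.charpoly_smul_one_add_of_isNilpotent {B : Matrix N N R} (hB : IsNilpotent B)
    (c : R) : (c • 1 + B).charpoly = (X - C c) ^ Fintype.card N := by
  have hB' : B.charpoly = X ^ Fintype.card N :=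
    sub_eq_zero.mp (isNilpotent_charpoly_sub_pow_of_isNilpotent hB).eq_zero
  have := charpoly_sub_scalar B (-c)
  rw [hB', sub_eq_add_neg, ← map_neg, scalar_apply, neg_neg, ← smul_one_eq_diagonal, map_neg,
    ← sub_eq_add_neg, add_comm] at this
  rw [this, pow_comp, X_comp]

theorem Matrix.eq_zero_of_mul_eq_smul_of_isNilpotent {κ : Type*} {B : Matrix N N R}
    (hB : IsNilpotent B) {c : R} (hc : c ≠ 0) {M : Matrix N κ R} (h : B * M = c • M) :
    M = 0 := by
  obtain ⟨k, hk⟩ := hB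
  have hpow (j : ℕ) : B ^ j * M = c ^ j • M := by
    induction j with
    | zero => simp
    | succ j ih => rw [pow_succ', Matrix.mul_assoc, ih, Matrix.mul_smul, h, smul_smul, pow_succ]
  ext i j
  simpa [hk, hc] using (congrFun (congrFun (hpow k) i) j).symm

end LinearAlgebra

section Pencil

variable {F : Type*} [Field F] {ι : Type} [Fintype ι] [DecidableEq ι] {m : ℕ}

theorem smul_M1_add_smul_M2 (l a b : F) (A B : Matrix ι ι F) :
    a • M1 m A + b • M2 m l B =
      fromBlocks (a • 1) 0 0 (fromBlocks (b • 1) 0 0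
        (fromBlocks ((a + b * l) • 1) 0 0 (a • A + b • B))) := by
  simp only [M1, M2, fromBlocks_smul, fromBlocks_add, smul_zero, add_zero, zero_add, smul_smul,
    add_smul]

theorem charpoly_smul_M1_add_smul_M2 (l a b : F) (A B : Matrix ι ι F) :
    (a • M1 m A + b • M2 m l B).charpoly =
      (X - C a) ^ (2 * m + 2) * (X - C b) ^ (3 * m + 3) * (X - C (a + b * l)) ^ (m + 1) *
        (a • A + b • B).charpoly := by
  simp only [smul_M1_add_smul_M2, charpoly_fromBlocks_zero₂₁, charpoly_smul_one,
    Fintype.card_fin, mul_assoc]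

theorem M1_commute_M2 (l : F) {A B : Matrix ι ι F} (h : Commute A B) :
    Commute (M1 m A) (M2 m l B) := by
  simp [Commute, SemiconjBy, M1, M2, fromBlocks_multiply, h.eq]

theorem weaklySimilar_M1_M2 (l : F) {A B B' D : Matrix ι ι F} (hD : IsUnit D)
    (hA : A * D = D * A) (hB : B * D = D * B') :
    WeaklySimilar (M1 m A) (M2 m l B) (M1 m A) (M2 m l B') := by
  have hS : IsUnit (fromBlocks 1 0 0 (fromBlocks 1 0 0 (fromBlocks 1 0 0 D)) :
      Matrix (MIdx m ι) (MIdx m ι) F) := by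
    simpa [isUnit_iff_isUnit_det, det_fromBlocks_zero₂₁] using hD
  refine ⟨_, 1, 0, 0, 1, hS, by simp [← one_fin_two], ?_, ?_⟩ <;>
    simp [inv_mul_mul_eq_iff hS, M1, M2, fromBlocks_multiply, hA, hB]

variable {κ : Type*}

def lastBlockRow (S : Matrix (MIdx m ι) κ F) : Matrix ι κ F :=
  S.toRows₂.toRows₂.toRows₂

theorem lastBlockRow_M1_mul (A : Matrix ι ι F) (S : Matrix (MIdx m ι) κ F) :
    lastBlockRow (M1 m A * S) = A * lastBlockRow S := by
  ext p c
  simp [lastBlockRow, M1, mul_apply, Fintype.sum_sum_type]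

theorem lastBlockRow_M2_mul (l : F) (B : Matrix ι ι F) (S : Matrix (MIdx m ι) κ F) :
    lastBlockRow (M2 m l B * S) = B * lastBlockRow S := by
  ext p c
  simp [lastBlockRow, M2, mul_apply, Fintype.sum_sum_type]

theorem fromCols_mul_M1 (R₁ : Matrix κ (Fin (2 * m + 2)) F) (R₂ : Matrix κ (Fin (3 * m + 3)) F)
    (R₃ : Matrix κ (Fin (m + 1)) F) (R₄ : Matrix κ ι F) (A : Matrix ι ι F) :
    fromCols R₁ (fromCols R₂ (fromCols R₃ R₄)) * M1 m A =
      fromCols R₁ (fromCols 0 (fromCols R₃ (R₄ * A))) := by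
  simp [M1, fromCols_mul_fromBlocks]

theorem fromCols_mul_M2 (l : F) (R₁ : Matrix κ (Fin (2 * m + 2)) F)
    (R₂ : Matrix κ (Fin (3 * m + 3)) F) (R₃ : Matrix κ (Fin (m + 1)) F) (R₄ : Matrix κ ι F)
    (B : Matrix ι ι F) :
    fromCols R₁ (fromCols R₂ (fromCols R₃ R₄)) * M2 m l B =
      fromCols 0 (fromCols R₂ (fromCols (l • R₃) (R₄ * B))) := by
  simp [M2, fromCols_mul_fromBlocks]

theorem lastBlockRow_of_intertwine {l : F} (hl : l ≠ 0) {A B B' : Matrix ι ι F}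
    (hB : IsNilpotent B) {S : Matrix (MIdx m ι) (MIdx m ι) F}
    (hA : M1 m A * S = S * M1 m A) (hB' : M2 m l B * S = S * M2 m l B') :
    ∃ R₁ R₄, lastBlockRow S = fromCols R₁ (fromCols 0 (fromCols 0 R₄)) ∧
      B * R₁ = 0 ∧ A * R₄ = R₄ * A ∧ B * R₄ = R₄ * B' := by
  set R := lastBlockRow S
  have hR : R = fromCols R.toCols₁ (fromCols R.toCols₂.toCols₁
      (fromCols R.toCols₂.toCols₂.toCols₁ R.toCols₂.toCols₂.toCols₂)) := by
    simp only [fromCols_toCols]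
  generalize R.toCols₁ = R₁, R.toCols₂.toCols₁ = R₂, R.toCols₂.toCols₂.toCols₁ = R₃,
    R.toCols₂.toCols₂.toCols₂ = R₄ at hR
  have hA' : A * fromCols R₁ (fromCols R₂ (fromCols R₃ R₄)) =
      fromCols R₁ (fromCols R₂ (fromCols R₃ R₄)) * M1 m A := by
    rw [← hR, ← lastBlockRow_M1_mul, hA]
    rfl
  have hB'' : B * fromCols R₁ (fromCols R₂ (fromCols R₃ R₄)) =
      fromCols R₁ (fromCols R₂ (fromCols R₃ R₄)) * M2 m l B' := by
    rw [← hR, ← lastBlockRow_M2_mul, hB']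
    rfl
  simp only [fromCols_mul_M1, fromCols_mul_M2, mul_fromCols, fromCols_ext_iff] at hA' hB''
  obtain ⟨-, -, -, hA₄⟩ := hA'
  obtain ⟨hB₁, hB₂, hB₃, hB₄⟩ := hB''
  obtain rfl : R₂ = 0 :=
    eq_zero_of_mul_eq_smul_of_isNilpotent hB one_ne_zero (by rw [hB₂, one_smul])
  obtain rfl : R₃ = 0 := eq_zero_of_mul_eq_smul_of_isNilpotent hB hl hB₃
  exact ⟨R₁, R₄, hR, hB₁, hA₄, hB₄⟩

end Pencil

section Spectrum

variable {F : Type*} [Field F]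

def pencilEigenvalues (m : ℕ) (l a b : F) : Multiset F :=
  (2 * m + 2) • {a} + (3 * m + 3) • {b} + (m + 1) • {a + b * l} + m • {a * l}

/- `a` and `b` occur at least `2m + 2` times while every value other than `0` and `1` occurs at
most `m + 1` times on the right, so `a, b ∈ {0, 1}`; the counts of `0` and `1` then decide. -/
theorem eq_of_pencilEigenvalues_eq {m : ℕ} {l a b c d : F} (hl : l ≠ 0)
    (hcd : c = 1 ∧ d = 0 ∨ c = 0 ∧ d = 1)
    (h : pencilEigenvalues m l a b = pencilEigenvalues m l c d) : a = c ∧ b = d := by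
  classical
  have count (x : F) := congrArg (Multiset.count x) h
  clear h
  rcases hcd with ⟨rfl, rfl⟩ | ⟨rfl, rfl⟩ <;>
  simp only [pencilEigenvalues, Multiset.count_add, Multiset.count_nsmul,
    Multiset.count_singleton, zero_mul, one_mul, add_zero, zero_add] at count
  all_goals
    have ha : a = 0 ∨ a = 1 := by
      by_contra! ha
      have := count a
      simp only [ha.1, ha.2, if_true, if_false] at this
      split_ifs at this <;> omega
    have hb : b = 0 ∨ b = 1 := by
      by_contra! hb
      have := count b
      simp only [hb.1, hb.2, if_true, if_false] at this
      split_ifs at this <;> omega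
    have h0 := count 0
    have h1 := count 1
    rcases ha with rfl | rfl <;> rcases hb with rfl | rfl <;>
      simp only [zero_mul, mul_zero, one_mul, add_zero, zero_add, hl.symm, one_ne_zero,
        zero_ne_one, if_true, if_false] at h0 h1 <;>
      first | exact ⟨rfl, rfl⟩ | (split_ifs at h0 h1 <;> omega)

end Spectrum

section Blocks

variable {F : Type*} [Field F] {n : ℕ}

def Jblocks : Matrix (Fin 5) (Fin 5) (Matrix (Fin n) (Fin n) F) :=
  of fun r s => if (r = 0 ∧ s = 1) ∨ (r = 1 ∧ s = 2) ∨ (r = 2 ∧ s = 3) then 1 else 0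

def Kblocks (X Y : Matrix (Fin n) (Fin n) F) :
    Matrix (Fin 5) (Fin 5) (Matrix (Fin n) (Fin n) F) :=
  of fun r s =>
    if (r = 0 ∧ s = 2) ∨ (r = 1 ∧ s = 3) then X
    else if r = 0 ∧ s = 4 then Y
    else if r = 4 ∧ s = 3 then 1
    else 0

theorem Jmat_eq_comp : Jmat F n = compRingEquiv _ _ _ Jblocks := by
  ext p q
  simp only [Jmat, Jblocks, of_apply, compRingEquiv_apply, comp_apply]
  split_ifs <;> rfl

theorem Kmat_eq_comp (X Y : Matrix (Fin n) (Fin n) F) :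
    Kmat X Y = compRingEquiv _ _ _ (Kblocks X Y) := by
  ext p q
  simp only [Kmat, Kblocks, of_apply, compRingEquiv_apply, comp_apply]
  split_ifs <;> rfl

theorem Jblocks_pow_four :
    (Jblocks : Matrix (Fin 5) (Fin 5) (Matrix (Fin n) (Fin n) F)) ^ 4 = 0 := by
  ext i j
  fin_cases i <;> fin_cases j <;> simp [pow_succ, Jblocks, mul_apply, Fin.sum_univ_five]

theorem Kblocks_pow_three (X Y : Matrix (Fin n) (Fin n) F) : Kblocks X Y ^ 3 = 0 := by
  ext i j
  fin_cases i <;> fin_cases j <;> simp [pow_succ, Kblocks, mul_apply, Fin.sum_univ_five]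

theorem Jblocks_commute_Kblocks (X Y : Matrix (Fin n) (Fin n) F) :
    Commute Jblocks (Kblocks X Y) := by
  ext i j
  fin_cases i <;> fin_cases j <;> simp [Jblocks, Kblocks, mul_apply, Fin.sum_univ_five]

theorem Jblocks_commute_scalar (W : Matrix (Fin n) (Fin n) F) :
    Commute Jblocks (scalar (Fin 5) W) := by
  ext r s
  simp only [scalar_apply, mul_diagonal, diagonal_mul, Jblocks, of_apply]
  split_ifs <;> simp

theorem Kblocks_mul_scalar {X Y X' Y' W : Matrix (Fin n) (Fin n) F} (hX : X * W = W * X')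
    (hY : Y * W = W * Y') :
    Kblocks X Y * scalar (Fin 5) W = scalar (Fin 5) W * Kblocks X' Y' := by
  ext r s
  simp only [scalar_apply, mul_diagonal, diagonal_mul, Kblocks, of_apply]
  split_ifs <;> simp [hX, hY]

section Commutant

variable {C : Matrix (Fin 5) (Fin 5) (Matrix (Fin n) (Fin n) F)}

theorem entries_of_commute_Jblocks (h : Jblocks * C = C * Jblocks) :
    C 3 0 = 0 ∧ C 3 1 = 0 ∧ C 3 2 = 0 ∧ C 3 3 = C 0 0 ∧ C 3 4 = 0 ∧
      C 2 2 = C 0 0 ∧ C 2 4 = 0 ∧ C 4 1 = 0 ∧ C 4 2 = 0 := by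
  have e := fun r s => congrFun (congrFun h r) s
  simp only [Fin.forall_fin_succ, IsEmpty.forall_iff] at e
  simp [Jblocks, mul_apply] at e
  grind

theorem intertwine_of_Kblocks {X Y X' Y' : Matrix (Fin n) (Fin n) F}
    (hJ : Jblocks * C = C * Jblocks) (hK : Kblocks X Y * C = C * Kblocks X' Y') :
    X * C 0 0 = C 0 0 * X' ∧ Y * C 0 0 = C 0 0 * Y' := by
  obtain ⟨-, -, -, h33, -, h22, h24, h41, h42⟩ := entries_of_commute_Jblocks hJ
  have e (r s) := congrFun (congrFun hK r) s
  have e02 := e 0 2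
  have e04 := e 0 4
  have e43 := e 4 3
  simp [Kblocks, mul_apply, Fin.sum_univ_five, h22, h24, h33, h41, h42] at e02 e04 e43
  rw [← e43] at e04
  exact ⟨e02, e04⟩

end Commutant

theorem isNilpotent_Jmat : IsNilpotent (Jmat F n) :=
  ⟨4, by rw [Jmat_eq_comp, ← map_pow, Jblocks_pow_four, map_zero]⟩

theorem isNilpotent_Kmat (X Y : Matrix (Fin n) (Fin n) F) : IsNilpotent (Kmat X Y) :=
  ⟨3, by rw [Kmat_eq_comp, ← map_pow, Kblocks_pow_three, map_zero]⟩

theorem Jmat_commute_Kmat (X Y : Matrix (Fin n) (Fin n) F) : Commute (Jmat F n) (Kmat X Y) := by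
  rw [Jmat_eq_comp, Kmat_eq_comp]
  exact (Jblocks_commute_Kblocks X Y).map _

theorem Kmat_mul_apply_four {κ : Type*} (X Y : Matrix (Fin n) (Fin n) F)
    (M : Matrix (Fin 5 × Fin n) κ F) (i : Fin n) (c : κ) :
    (Kmat X Y * M) (4, i) c = M (3, i) c := by
  simp [Kmat, mul_apply, Fintype.sum_prod_type, one_apply]

theorem roots_charpoly_pencil (l a b : F) (X Y : Matrix (Fin n) (Fin n) F) :
    (a • M1 (5 * n) (l • 1 + Jmat F n) + b • M2 (5 * n) l (Kmat X Y)).charpoly.roots =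
      pencilEigenvalues (5 * n) l a b := by
  have hN : IsNilpotent (a • Jmat F n + b • Kmat X Y) :=
    (((Jmat_commute_Kmat X Y).smul_left a).smul_right b).isNilpotent_add
      (isNilpotent_Jmat.smul a) ((isNilpotent_Kmat X Y).smul b)
  have hsplit : a • (l • 1 + Jmat F n) + b • Kmat X Y =
      (a * l) • 1 + (a • Jmat F n + b • Kmat X Y) := by
    rw [smul_add, smul_smul, add_assoc]
  rw [charpoly_smul_M1_add_smul_M2, hsplit, charpoly_smul_one_add_of_isNilpotent hN,
    Fintype.card_prod, Fintype.card_fin, Fintype.card_fin,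
    ← roots_multiset_prod_X_sub_C (pencilEigenvalues _ l a b)]
  simp [pencilEigenvalues, Multiset.map_nsmul, Multiset.prod_nsmul]

end Blocks

section Similarity

variable {F : Type*} [Field F] {n : ℕ} {X Y X' Y' : Matrix (Fin n) (Fin n) F}

theorem weaklySimilar_of_similar (l : F) {W : Matrix (Fin n) (Fin n) F} (hW : IsUnit W)
    (hX : W⁻¹ * X * W = X') (hY : W⁻¹ * Y * W = Y') :
    WeaklySimilar (M1 (5 * n) (l • 1 + Jmat F n)) (M2 (5 * n) l (Kmat X Y))
      (M1 (5 * n) (l • 1 + Jmat F n)) (M2 (5 * n) l (Kmat X' Y')) := by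
  rw [inv_mul_mul_eq_iff hW] at hX hY
  have hJ : Commute (Jmat F n) (compRingEquiv _ _ _ (scalar (Fin 5) W)) := by
    rw [Jmat_eq_comp]
    exact (Jblocks_commute_scalar W).map _
  refine weaklySimilar_M1_M2 l ((hW.map (scalar (Fin 5))).map (compRingEquiv _ _ _)) ?_ ?_
  · exact (((Commute.one_left _).smul_left l).add_left hJ).eq
  · rw [Kmat_eq_comp, Kmat_eq_comp, ← map_mul, ← map_mul, Kblocks_mul_scalar hX hY]

theorem intertwine_of_weaklySimilar {l : F} (hl : l ≠ 0)
    (h : WeaklySimilar (M1 (5 * n) (l • 1 + Jmat F n)) (M2 (5 * n) l (Kmat X Y))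
      (M1 (5 * n) (l • 1 + Jmat F n)) (M2 (5 * n) l (Kmat X' Y'))) :
    ∃ S, IsUnit S ∧ M1 (5 * n) (l • 1 + Jmat F n) * S = S * M1 (5 * n) (l • 1 + Jmat F n) ∧
      M2 (5 * n) l (Kmat X Y) * S = S * M2 (5 * n) l (Kmat X' Y') := by
  obtain ⟨S, α, β, γ, δ, hS, -, hA, hB⟩ := h
  have spectrum_eq (a b c d : F) (h : S⁻¹ * (a • M1 (5 * n) (l • 1 + Jmat F n) +
      b • M2 (5 * n) l (Kmat X Y)) * S =
        c • M1 (5 * n) (l • 1 + Jmat F n) + d • M2 (5 * n) l (Kmat X' Y')) :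
      pencilEigenvalues (5 * n) l a b = pencilEigenvalues (5 * n) l c d := by
    have := congrArg (fun M => M.charpoly.roots) h
    rwa [← hS.unit_spec, charpoly_units_conj', roots_charpoly_pencil,
      roots_charpoly_pencil] at this
  obtain ⟨rfl, rfl⟩ := eq_of_pencilEigenvalues_eq hl (Or.inl ⟨rfl, rfl⟩)
    (spectrum_eq α β 1 0 (by rwa [one_smul, zero_smul, add_zero]))
  obtain ⟨rfl, rfl⟩ := eq_of_pencilEigenvalues_eq hl (Or.inr ⟨rfl, rfl⟩)
    (spectrum_eq γ δ 0 1 (by rwa [zero_smul, one_smul, zero_add]))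
  rw [one_smul, zero_smul, add_zero, inv_mul_mul_eq_iff hS] at hA
  rw [zero_smul, one_smul, zero_add, inv_mul_mul_eq_iff hS] at hB
  exact ⟨S, hS, hA, hB⟩

theorem exists_similar_of_intertwine {l : F} (hl : l ≠ 0)
    {S : Matrix (MIdx (5 * n) (Fin 5 × Fin n)) (MIdx (5 * n) (Fin 5 × Fin n)) F} (hS : IsUnit S)
    (h1 : M1 (5 * n) (l • 1 + Jmat F n) * S = S * M1 (5 * n) (l • 1 + Jmat F n))
    (h2 : M2 (5 * n) l (Kmat X Y) * S = S * M2 (5 * n) l (Kmat X' Y')) :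
    ∃ W : Matrix (Fin n) (Fin n) F, IsUnit W ∧ W⁻¹ * X * W = X' ∧ W⁻¹ * Y * W = Y' := by
  obtain ⟨R₁, T, hR, hR₁, hA, hK⟩ := lastBlockRow_of_intertwine hl (isNilpotent_Kmat X Y) h1 h2
  have hrow (i : Fin n) (c) : S (Sum.inr (Sum.inr (Sum.inr (3, i)))) c =
      fromCols R₁ (fromCols 0 (fromCols 0 T)) (3, i) c :=
    congrFun (congrFun hR (3, i)) c
  set C := (compRingEquiv (Fin 5) (Fin n) F).symm T
  have hJC : Jblocks * C = C * Jblocks := by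
    apply (compRingEquiv (Fin 5) (Fin n) F).injective
    rw [map_mul, map_mul, ← Jmat_eq_comp, RingEquiv.apply_symm_apply]
    simpa [add_mul, mul_add] using hA
  have hKC : Kblocks X Y * C = C * Kblocks X' Y' := by
    apply (compRingEquiv (Fin 5) (Fin n) F).injective
    rwa [map_mul, map_mul, ← Kmat_eq_comp, ← Kmat_eq_comp, RingEquiv.apply_symm_apply]
  obtain ⟨h30, h31, h32, h33, h34, -⟩ := entries_of_commute_Jblocks hJC
  obtain ⟨hX, hY⟩ := intertwine_of_Kblocks hJC hKC
  have hC : IsUnit (C 0 0) := by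
    let e (k : Fin n) : MIdx (5 * n) (Fin 5 × Fin n) := Sum.inr (Sum.inr (Sum.inr (3, k)))
    have hsub : C 0 0 = S.submatrix e e := by
      ext i k
      rw [← h33, submatrix_apply, hrow]
      rfl
    rw [hsub]
    refine isUnit_submatrix_of_apply_eq_zero hS (fun i j h => by simpa [e] using h) ?_
    rintro i (a | b | b | ⟨s, k⟩) hc <;> rw [hrow]
    · simpa [Kmat_mul_apply_four] using congrFun (congrFun hR₁ (4, i)) a
    · rfl
    · rfl
    · have hs : s ≠ 3 := by
        rintro rfl
        exact hc ⟨k, rfl⟩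
      have hC3 : C 3 s = 0 := by
        fin_cases s
        exacts [h30, h31, h32, absurd rfl hs, h34]
      exact congrFun (congrFun hC3 i) k
  exact ⟨C 0 0, hC, (inv_mul_mul_eq_iff hC).2 hX, (inv_mul_mul_eq_iff hC).2 hY⟩

end Similarity

theorem similar_iff_MJK_weaklySimilar_general (F : Type*) [Field F]
    (l : F) (hl0 : l ≠ 0) (n : ℕ)
    (X Y X' Y' : Matrix (Fin n) (Fin n) F) :
    ((∃ S : Matrix (Fin n) (Fin n) F, IsUnit S ∧
        S⁻¹ * X * S = X' ∧ S⁻¹ * Y * S = Y') ↔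
      WeaklySimilar
        (M1 (5*n) (l • (1 : Matrix (Fin 5 × Fin n) (Fin 5 × Fin n) F) + Jmat F n))
        (M2 (5*n) l (Kmat X Y))
        (M1 (5*n) (l • (1 : Matrix (Fin 5 × Fin n) (Fin 5 × Fin n) F) + Jmat F n))
        (M2 (5*n) l (Kmat X' Y'))) ∧
    M1 (5*n) (l • (1 : Matrix (Fin 5 × Fin n) (Fin 5 × Fin n) F) + Jmat F n)
        * M2 (5*n) l (Kmat X Y)
      = M2 (5*n) l (Kmat X Y)
        * M1 (5*n) (l • (1 : Matrix (Fin 5 × Fin n) (Fin 5 × Fin n) F) + Jmat F n) := by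
  refine ⟨⟨fun ⟨W, hW, hX, hY⟩ => weaklySimilar_of_similar l hW hX hY, fun h => ?_⟩, ?_⟩
  · obtain ⟨S, hS, hA, hB⟩ := intertwine_of_weaklySimilar hl0 h
    exact exists_similar_of_intertwine hl0 hS hA hB
  · exact (M1_commute_M2 l (((Commute.one_left _).smul_left l).add_left
      (Jmat_commute_Kmat X Y))).eq

/-- Let `F` be a field with at least 3 elements, `λ ∈ F` with `λ ≠ 0` and
`λ ≠ -1`, and `n ≥ 1`.  Then `(X, Y)` and `(X', Y')` are similar iff the pairs
`(M₁(λI_{5n} + J), M₂(K_{X,Y}))` and `(M₁(λI_{5n} + J), M₂(K_{X',Y'}))` are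
weakly similar; moreover `M₁(λI_{5n} + J)` and `M₂(K_{X,Y})` commute. -/
theorem similar_iff_MJK_weaklySimilar (F : Type*) [Field F]
    (hF : ∃ x y z : F, x ≠ y ∧ x ≠ z ∧ y ≠ z)
    (l : F) (hl0 : l ≠ 0) (hl1 : l ≠ -1) (n : ℕ) (hn : 1 ≤ n)
    (X Y X' Y' : Matrix (Fin n) (Fin n) F) :
    ((∃ S : Matrix (Fin n) (Fin n) F, IsUnit S ∧
        S⁻¹ * X * S = X' ∧ S⁻¹ * Y * S = Y') ↔
      WeaklySimilar
        (M1 (5*n) (l • (1 : Matrix (Fin 5 × Fin n) (Fin 5 × Fin n) F) + Jmat F n))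
        (M2 (5*n) l (Kmat X Y))
        (M1 (5*n) (l • (1 : Matrix (Fin 5 × Fin n) (Fin 5 × Fin n) F) + Jmat F n))
        (M2 (5*n) l (Kmat X' Y'))) ∧
    M1 (5*n) (l • (1 : Matrix (Fin 5 × Fin n) (Fin 5 × Fin n) F) + Jmat F n)
        * M2 (5*n) l (Kmat X Y)
      = M2 (5*n) l (Kmat X Y)
        * M1 (5*n) (l • (1 : Matrix (Fin 5 × Fin n) (Fin 5 × Fin n) F) + Jmat F n) :=
  similar_iff_MJK_weaklySimilar_general F l hl0 n X Y X' Y'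
end
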